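/- arXiv:2006.07682 — 5 statements merged into one kernel-verified Lean document; each statement's English description precedes it below -/
import Mathlib

section
/- Let f : ℝⁿ → ℝᵈ be L-Lipschitz (with respect to Euclidean norms), and let μ₁, μ₂ ∈ ℝᵈ with μ₁ ≠ μ₂. Suppose x ∈ ℝⁿ satisfies ‖f(x) − μ₁‖ < ‖f(x) − μ₂‖. Then for every δ ∈ ℝⁿ with ‖δ‖ < (‖f(x) − μ₂‖² − ‖f(x) − μ₁‖²) / (2 L ‖μ₂ − μ₁‖), we have ‖f(x+δ) − μ₁‖ < ‖f(x+δ) − μ₂‖. -/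
/-!
Moving a point `a` to `b` changes its margin `‖a - μ₂‖² - ‖a - μ₁‖²` by exactly
`2 ⟪b - a, μ₁ - μ₂⟫`, hence by at most `2 ‖b - a‖ ‖μ₂ - μ₁‖` (Cauchy–Schwarz). For `b = f (x + δ)`
and `a = f x`, the Lipschitz bound makes this at most `2 L ‖δ‖ ‖μ₂ - μ₁‖`, which the radius
condition keeps below the margin at `x`, so the margin at `x + δ` stays positive.
-/

open scoped RealInnerProductSpace

section Margin

variable {E : Type*} [NormedAddCommGroup E] [InnerProductSpace ℝ E]

theorem norm_sub_sq_sub_norm_sub_sq_eq (a b μ₁ μ₂ : E) :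
    ‖b - μ₂‖ ^ 2 - ‖b - μ₁‖ ^ 2 = ‖a - μ₂‖ ^ 2 - ‖a - μ₁‖ ^ 2 + 2 * ⟪b - a, μ₁ - μ₂⟫ := by
  simp only [norm_sub_sq_real, inner_sub_left, inner_sub_right]
  ring

theorem norm_sub_lt_norm_sub_of_two_mul_lt {a b μ₁ μ₂ : E}
    (h : 2 * ‖b - a‖ * ‖μ₂ - μ₁‖ < ‖a - μ₂‖ ^ 2 - ‖a - μ₁‖ ^ 2) :
    ‖b - μ₁‖ < ‖b - μ₂‖ := by
  have hinner : -(‖b - a‖ * ‖μ₂ - μ₁‖) ≤ ⟪b - a, μ₁ - μ₂⟫ := by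
    rw [← norm_sub_rev μ₁]
    exact neg_le_of_abs_le (abs_real_inner_le_norm _ _)
  have hsq : ‖b - μ₁‖ ^ 2 < ‖b - μ₂‖ ^ 2 := by
    linarith [norm_sub_sq_sub_norm_sub_sq_eq a b μ₁ μ₂]
  exact lt_of_pow_lt_pow_left₀ 2 (norm_nonneg _) hsq

end Margin

theorem clustr_robustness_radius_general
    {n d : ℕ} (f : EuclideanSpace ℝ (Fin n) → EuclideanSpace ℝ (Fin d))
    (L : ℝ) (hf : ∀ x y, ‖f x - f y‖ ≤ L * ‖x - y‖)
    (μ₁ μ₂ : EuclideanSpace ℝ (Fin d))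
    (x : EuclideanSpace ℝ (Fin n))
    (hx : ‖f x - μ₁‖ < ‖f x - μ₂‖)
    (δ : EuclideanSpace ℝ (Fin n))
    (hδ : ‖δ‖ < (‖f x - μ₂‖ ^ 2 - ‖f x - μ₁‖ ^ 2) / (2 * L * ‖μ₂ - μ₁‖)) :
    ‖f (x + δ) - μ₁‖ < ‖f (x + δ) - μ₂‖ := by
  apply norm_sub_lt_norm_sub_of_two_mul_lt
  have hmargin : 0 < ‖f x - μ₂‖ ^ 2 - ‖f x - μ₁‖ ^ 2 :=
    sub_pos.2 (pow_lt_pow_left₀ hx (norm_nonneg _) two_ne_zero)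
  have hdenom : 0 < 2 * L * ‖μ₂ - μ₁‖ := by
    by_contra! h
    linarith [norm_nonneg δ, div_nonpos_of_nonneg_of_nonpos hmargin.le h]
  have hstep : ‖f (x + δ) - f x‖ ≤ L * ‖δ‖ := by simpa using hf (x + δ) x
  calc 2 * ‖f (x + δ) - f x‖ * ‖μ₂ - μ₁‖
      ≤ 2 * (L * ‖δ‖) * ‖μ₂ - μ₁‖ := by gcongr
    _ = 2 * L * ‖μ₂ - μ₁‖ * ‖δ‖ := by ring
    _ < ‖f x - μ₂‖ ^ 2 - ‖f x - μ₁‖ ^ 2 := (lt_div_iff₀' hdenom).1 hδ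

theorem clustr_robustness_radius
    {n d : ℕ} (f : EuclideanSpace ℝ (Fin n) → EuclideanSpace ℝ (Fin d))
    (L : ℝ) (hf : ∀ x y, ‖f x - f y‖ ≤ L * ‖x - y‖)
    (μ₁ μ₂ : EuclideanSpace ℝ (Fin d)) (hμ : μ₁ ≠ μ₂)
    (x : EuclideanSpace ℝ (Fin n))
    (hx : ‖f x - μ₁‖ < ‖f x - μ₂‖)
    (δ : EuclideanSpace ℝ (Fin n))
    (hδ : ‖δ‖ < (‖f x - μ₂‖ ^ 2 - ‖f x - μ₁‖ ^ 2) / (2 * L * ‖μ₂ - μ₁‖)) :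
    ‖f (x + δ) - μ₁‖ < ‖f (x + δ) - μ₂‖ :=
  clustr_robustness_radius_general f L hf μ₁ μ₂ x hx δ hδ
end

section
/- Let f : ℝⁿ → ℝᵈ be L-Lipschitz with L > 0, and let μ₁ ≠ μ₂ ∈ ℝᵈ. Fix x ∈ ℝⁿ with ‖f(x) − μ₁‖ < ‖f(x) − μ₂‖, and let r = (‖f(x) − μ₂‖² − ‖f(x) − μ₁‖²)/(2L‖μ₂ − μ₁‖). Suppose δ ∈ ℝⁿ satisfies f(x+δ) − f(x) = (L‖δ‖/‖μ₂ − μ₁‖)(μ₂ − μ₁) and ‖δ‖ ≥ r. Then ‖f(x+δ) − μ₂‖ ≤ ‖f(x+δ) − μ₁‖, i.e., x+δ is no longer strictly classified as class 1. -/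
/-! Moving the feature vector by `t • (μ₂ - μ₁)` raises the margin `‖p - μ₁‖² - ‖p - μ₂‖²` by
exactly `2 t ‖μ₂ - μ₁‖²`. With `t = L ‖δ‖ / ‖μ₂ - μ₁‖` the gain is `2 L ‖μ₂ - μ₁‖ ‖δ‖`, while the
margin at `f x` is `-2 L ‖μ₂ - μ₁‖ r`; hence `‖δ‖ ≥ r` makes the margin at `f (x + δ)` nonnegative. -/

section MarginAlongDirection

variable {E : Type*} [NormedAddCommGroup E] [InnerProductSpace ℝ E]

lemma norm_sub_sq_sub_norm_sub_sq (p a b : E) :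
    ‖p - a‖ ^ 2 - ‖p - b‖ ^ 2 = 2 * inner ℝ p (b - a) + ‖a‖ ^ 2 - ‖b‖ ^ 2 := by
  rw [norm_sub_sq_real, norm_sub_sq_real, inner_sub_right]
  ring

lemma norm_sub_sq_sub_norm_sub_sq_add_smul (p a b : E) (t : ℝ) :
    ‖p + t • (b - a) - a‖ ^ 2 - ‖p + t • (b - a) - b‖ ^ 2
      = ‖p - a‖ ^ 2 - ‖p - b‖ ^ 2 + 2 * t * ‖b - a‖ ^ 2 := by
  rw [norm_sub_sq_sub_norm_sub_sq, norm_sub_sq_sub_norm_sub_sq, inner_add_left,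
    real_inner_smul_left, real_inner_self_eq_norm_sq]
  ring

end MarginAlongDirection

theorem clustr_tightness_general
    {n d : ℕ} (f : EuclideanSpace ℝ (Fin n) → EuclideanSpace ℝ (Fin d))
    (L : ℝ) (hL : 0 < L)
    (μ₁ μ₂ : EuclideanSpace ℝ (Fin d)) (hμ : μ₁ ≠ μ₂)
    (x : EuclideanSpace ℝ (Fin n))
    (r : ℝ) (hr : r = (‖f x - μ₂‖ ^ 2 - ‖f x - μ₁‖ ^ 2) / (2 * L * ‖μ₂ - μ₁‖))
    (δ : EuclideanSpace ℝ (Fin n))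
    (hdir : f (x + δ) - f x = (L * ‖δ‖ / ‖μ₂ - μ₁‖) • (μ₂ - μ₁))
    (hδ : r ≤ ‖δ‖) :
    ‖f (x + δ) - μ₂‖ ≤ ‖f (x + δ) - μ₁‖ := by
  have hm : 0 < ‖μ₂ - μ₁‖ := norm_pos_iff.mpr (sub_ne_zero.mpr hμ.symm)
  have hmargin_x : ‖f x - μ₁‖ ^ 2 - ‖f x - μ₂‖ ^ 2 = -(2 * L * ‖μ₂ - μ₁‖ * r) := by
    rw [hr]; field_simp; ring
  have hgain : 2 * (L * ‖δ‖ / ‖μ₂ - μ₁‖) * ‖μ₂ - μ₁‖ ^ 2 = 2 * L * ‖μ₂ - μ₁‖ * ‖δ‖ := by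
    field_simp
  have hmargin : ‖f (x + δ) - μ₁‖ ^ 2 - ‖f (x + δ) - μ₂‖ ^ 2
      = 2 * L * ‖μ₂ - μ₁‖ * (‖δ‖ - r) := by
    rw [eq_add_of_sub_eq' hdir, norm_sub_sq_sub_norm_sub_sq_add_smul, hmargin_x, hgain]
    ring
  have hnonneg : 0 ≤ 2 * L * ‖μ₂ - μ₁‖ * (‖δ‖ - r) := by
    have := sub_nonneg.mpr hδ
    positivity
  exact (sq_le_sq₀ (norm_nonneg _) (norm_nonneg _)).mp (by linarith)

theorem clustr_tightness
    {n d : ℕ} (f : EuclideanSpace ℝ (Fin n) → EuclideanSpace ℝ (Fin d))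
    (L : ℝ) (hL : 0 < L) (hf : ∀ x y, ‖f x - f y‖ ≤ L * ‖x - y‖)
    (μ₁ μ₂ : EuclideanSpace ℝ (Fin d)) (hμ : μ₁ ≠ μ₂)
    (x : EuclideanSpace ℝ (Fin n))
    (hx : ‖f x - μ₁‖ < ‖f x - μ₂‖)
    (r : ℝ) (hr : r = (‖f x - μ₂‖ ^ 2 - ‖f x - μ₁‖ ^ 2) / (2 * L * ‖μ₂ - μ₁‖))
    (δ : EuclideanSpace ℝ (Fin n))
    (hdir : f (x + δ) - f x = (L * ‖δ‖ / ‖μ₂ - μ₁‖) • (μ₂ - μ₁))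
    (hδ : r ≤ ‖δ‖) :
    ‖f (x + δ) - μ₂‖ ≤ ‖f (x + δ) - μ₁‖ :=
  clustr_tightness_general f L hL μ₁ μ₂ hμ x r hr δ hdir hδ
end

section
/- Let f : ℝⁿ → ℝᵈ be L-Lipschitz (L > 0) and μ₁ ≠ μ₂ ∈ ℝᵈ. Define the classifier g(x) = 1 if ‖f(x) − μ₁‖ < ‖f(x) − μ₂‖ and g(x) = 2 otherwise. If g(x) = 1 and g(x+δ) = 2, then ‖δ‖ ≥ (‖f(x) − μ₂‖² − ‖f(x) − μ₁‖²)/(2L‖μ₂ − μ₁‖). -/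
open scoped RealInnerProductSpace

/-! The margin `‖y - μ₂‖² - ‖y - μ₁‖²` by which `y` is closer to `μ₁` than to `μ₂` is affine in `y`
with linear part `2⟪·, μ₁ - μ₂⟫`, hence `2‖μ₂ - μ₁‖`-Lipschitz. It is nonpositive at `f (x + δ)`,
so at `f x` it is at most `2‖μ₂ - μ₁‖ ‖f x - f (x + δ)‖ ≤ 2 L ‖μ₂ - μ₁‖ ‖δ‖`. -/

section CenterMargin

variable {F : Type*} [NormedAddCommGroup F]

def centerMargin (μ₁ μ₂ y : F) : ℝ := ‖y - μ₂‖ ^ 2 - ‖y - μ₁‖ ^ 2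

theorem centerMargin_nonpos {μ₁ μ₂ y : F} (h : ‖y - μ₂‖ ≤ ‖y - μ₁‖) :
    centerMargin μ₁ μ₂ y ≤ 0 :=
  sub_nonpos.2 (pow_le_pow_left₀ (norm_nonneg _) h 2)

variable [InnerProductSpace ℝ F]

theorem centerMargin_sub_centerMargin (μ₁ μ₂ a b : F) :
    centerMargin μ₁ μ₂ a - centerMargin μ₁ μ₂ b = 2 * ⟪a - b, μ₁ - μ₂⟫ := by
  simp only [centerMargin, norm_sub_sq_real, inner_sub_left, inner_sub_right]
  ring

theorem centerMargin_le_centerMargin_add (μ₁ μ₂ a b : F) :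
    centerMargin μ₁ μ₂ a ≤ centerMargin μ₁ μ₂ b + 2 * ‖μ₂ - μ₁‖ * ‖a - b‖ := by
  have h := centerMargin_sub_centerMargin μ₁ μ₂ a b
  have hinner : ⟪a - b, μ₁ - μ₂⟫ ≤ ‖a - b‖ * ‖μ₂ - μ₁‖ :=
    norm_sub_rev μ₁ μ₂ ▸ real_inner_le_norm _ _
  linarith

end CenterMargin

theorem clustr_adversarial_norm_lower_bound_general
    {n d : ℕ} (f : EuclideanSpace ℝ (Fin n) → EuclideanSpace ℝ (Fin d))
    (L : ℝ) (hL : 0 < L) (hf : ∀ x y, ‖f x - f y‖ ≤ L * ‖x - y‖)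
    (μ₁ μ₂ : EuclideanSpace ℝ (Fin d))
    (g : EuclideanSpace ℝ (Fin n) → Fin 2)
    (hg : ∀ y, g y = if ‖f y - μ₁‖ < ‖f y - μ₂‖ then 0 else 1)
    (x δ : EuclideanSpace ℝ (Fin n))
    (hadv : g (x + δ) = 1) :
    ‖δ‖ ≥ (‖f x - μ₂‖ ^ 2 - ‖f x - μ₁‖ ^ 2) / (2 * L * ‖μ₂ - μ₁‖) := by
  have hflip : ‖f (x + δ) - μ₂‖ ≤ ‖f (x + δ) - μ₁‖ := by
    by_contra! h
    simp [hg, h] at hadv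
  have hstep : ‖f x - f (x + δ)‖ ≤ L * ‖δ‖ := by
    simpa [norm_sub_rev x] using hf x (x + δ)
  have hmargin : centerMargin μ₁ μ₂ (f x) ≤ ‖δ‖ * (2 * L * ‖μ₂ - μ₁‖) :=
    calc centerMargin μ₁ μ₂ (f x)
        ≤ centerMargin μ₁ μ₂ (f (x + δ)) + 2 * ‖μ₂ - μ₁‖ * ‖f x - f (x + δ)‖ :=
          centerMargin_le_centerMargin_add _ _ _ _
      _ ≤ 0 + 2 * ‖μ₂ - μ₁‖ * (L * ‖δ‖) := by
          gcongr
          exact centerMargin_nonpos hflip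
      _ = ‖δ‖ * (2 * L * ‖μ₂ - μ₁‖) := by ring
  exact div_le_of_le_mul₀ (by positivity) (norm_nonneg δ) hmargin

theorem clustr_adversarial_norm_lower_bound
    {n d : ℕ} (f : EuclideanSpace ℝ (Fin n) → EuclideanSpace ℝ (Fin d))
    (L : ℝ) (hL : 0 < L) (hf : ∀ x y, ‖f x - f y‖ ≤ L * ‖x - y‖)
    (μ₁ μ₂ : EuclideanSpace ℝ (Fin d)) (hμ : μ₁ ≠ μ₂)
    (g : EuclideanSpace ℝ (Fin n) → Fin 2)
    (hg : ∀ y, g y = if ‖f y - μ₁‖ < ‖f y - μ₂‖ then 0 else 1)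
    (x δ : EuclideanSpace ℝ (Fin n))
    (hx : g x = 0) (hadv : g (x + δ) = 1) :
    ‖δ‖ ≥ (‖f x - μ₂‖ ^ 2 - ‖f x - μ₁‖ ^ 2) / (2 * L * ‖μ₂ - μ₁‖) :=
  clustr_adversarial_norm_lower_bound_general f L hL hf μ₁ μ₂ g hg x δ hadv
end

section
/- Let f : ℝⁿ → ℝᵈ be L-Lipschitz, μ₁ ≠ μ₂ ∈ ℝᵈ, and suppose x satisfies ‖f(x) − μ₁‖ < ‖f(x) − μ₂‖. Let r = (‖f(x) − μ₂‖² − ‖f(x) − μ₁‖²)/(2L‖μ₂ − μ₁‖). Then for any δ with ‖δ‖ < r, the perturbed point satisfies the strict quantitative margin: ‖f(x+δ) − μ₂‖² − ‖f(x+δ) − μ₁‖² ≥ 2L‖μ₂ − μ₁‖ (r − ‖δ‖) > 0. -/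
open scoped RealInnerProductSpace

/-! The margin `‖y - μ₂‖² - ‖y - μ₁‖²` is an affine function of `y` with linear part
`2⟪y, μ₁ - μ₂⟫`, so by Cauchy–Schwarz it is `2‖μ₂ - μ₁‖`-Lipschitz in `y`; composed with the
`L`-Lipschitz map `f` it drops by at most `2L‖μ₂ - μ₁‖‖δ‖` from `x` to `x + δ`, and `r` is exactly
the margin at `x` divided by `2L‖μ₂ - μ₁‖`. -/

section InnerProductSpace

variable {E : Type*} [NormedAddCommGroup E] [InnerProductSpace ℝ E]

theorem sq_norm_sub_sub_sq_norm_sub_eq (y z a b : E) :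
    ‖y - b‖ ^ 2 - ‖y - a‖ ^ 2 = ‖z - b‖ ^ 2 - ‖z - a‖ ^ 2 + 2 * ⟪y - z, a - b⟫ := by
  rw [norm_sub_sq_real y b, norm_sub_sq_real y a, norm_sub_sq_real z b, norm_sub_sq_real z a,
    inner_sub_left, inner_sub_right, inner_sub_right]
  ring

theorem sq_norm_sub_sub_sq_norm_sub_ge (y z a b : E) :
    ‖z - b‖ ^ 2 - ‖z - a‖ ^ 2 - 2 * (‖y - z‖ * ‖b - a‖) ≤ ‖y - b‖ ^ 2 - ‖y - a‖ ^ 2 := by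
  have hcs : -(‖y - z‖ * ‖a - b‖) ≤ ⟪y - z, a - b⟫ :=
    (abs_le.mp (abs_real_inner_le_norm (y - z) (a - b))).1
  rw [sq_norm_sub_sub_sq_norm_sub_eq y z a b, norm_sub_rev b a]
  linarith

theorem sq_norm_sub_sub_sq_norm_sub_comp_add_ge {X : Type*} [SeminormedAddCommGroup X]
    {f : X → E} {L : ℝ} (hf : ∀ x y, ‖f x - f y‖ ≤ L * ‖x - y‖) (a b : E) (x δ : X) :
    ‖f x - b‖ ^ 2 - ‖f x - a‖ ^ 2 - 2 * L * ‖δ‖ * ‖b - a‖ ≤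
      ‖f (x + δ) - b‖ ^ 2 - ‖f (x + δ) - a‖ ^ 2 := by
  have hlip : ‖f (x + δ) - f x‖ ≤ L * ‖δ‖ := by simpa using hf (x + δ) x
  have hmul := mul_le_mul_of_nonneg_right hlip (norm_nonneg (b - a))
  linarith [sq_norm_sub_sub_sq_norm_sub_ge (f (x + δ)) (f x) a b]

end InnerProductSpace

theorem clustr_quantitative_margin_general
    {n d : ℕ} (f : EuclideanSpace ℝ (Fin n) → EuclideanSpace ℝ (Fin d))
    (L : ℝ) (hL : 0 < L) (hf : ∀ x y, ‖f x - f y‖ ≤ L * ‖x - y‖)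
    (μ₁ μ₂ : EuclideanSpace ℝ (Fin d)) (hμ : μ₁ ≠ μ₂)
    (x : EuclideanSpace ℝ (Fin n))
    (r : ℝ) (hr : r = (‖f x - μ₂‖ ^ 2 - ‖f x - μ₁‖ ^ 2) / (2 * L * ‖μ₂ - μ₁‖))
    (δ : EuclideanSpace ℝ (Fin n)) (hδ : ‖δ‖ < r) :
    ‖f (x + δ) - μ₂‖ ^ 2 - ‖f (x + δ) - μ₁‖ ^ 2 ≥ 2 * L * ‖μ₂ - μ₁‖ * (r - ‖δ‖) ∧
    2 * L * ‖μ₂ - μ₁‖ * (r - ‖δ‖) > 0 := by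
  have hscale : 0 < 2 * L * ‖μ₂ - μ₁‖ := by
    have := norm_pos_iff.2 (sub_ne_zero.2 hμ.symm)
    positivity
  have hmargin : 2 * L * ‖μ₂ - μ₁‖ * r = ‖f x - μ₂‖ ^ 2 - ‖f x - μ₁‖ ^ 2 := by
    rw [hr, mul_div_cancel₀ _ hscale.ne']
  refine ⟨?_, mul_pos hscale (sub_pos.2 hδ)⟩
  have hdrop := sq_norm_sub_sub_sq_norm_sub_comp_add_ge hf μ₁ μ₂ x δ
  linarith

theorem clustr_quantitative_margin
    {n d : ℕ} (f : EuclideanSpace ℝ (Fin n) → EuclideanSpace ℝ (Fin d))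
    (L : ℝ) (hL : 0 < L) (hf : ∀ x y, ‖f x - f y‖ ≤ L * ‖x - y‖)
    (μ₁ μ₂ : EuclideanSpace ℝ (Fin d)) (hμ : μ₁ ≠ μ₂)
    (x : EuclideanSpace ℝ (Fin n))
    (hx : ‖f x - μ₁‖ < ‖f x - μ₂‖)
    (r : ℝ) (hr : r = (‖f x - μ₂‖ ^ 2 - ‖f x - μ₁‖ ^ 2) / (2 * L * ‖μ₂ - μ₁‖))
    (δ : EuclideanSpace ℝ (Fin n)) (hδ : ‖δ‖ < r) :
    ‖f (x + δ) - μ₂‖ ^ 2 - ‖f (x + δ) - μ₁‖ ^ 2 ≥ 2 * L * ‖μ₂ - μ₁‖ * (r - ‖δ‖) ∧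
    2 * L * ‖μ₂ - μ₁‖ * (r - ‖δ‖) > 0 :=
  clustr_quantitative_margin_general f L hL hf μ₁ μ₂ hμ x r hr δ hδ
end

section
/- Let a ∈ ℝᵈ, σ > 0, and centers μ : Fin m → ℝᵈ partitioned into classes by c : Fin m → Fin L. Define class probability P_v = (Σ_{j : c j = v} exp(−‖a − μ j‖²/(2σ²))) / (Σⱼ exp(−‖a − μ j‖²/(2σ²))). If there is an index i with c i = v such that ‖a − μ i‖² + 2σ² log m < ‖a − μ j‖² for every j with c j ≠ v, then P_v > 1/2. -/
/-! The margin makes every kernel weight from another class smaller than `1 / m` times the weight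
of the near cluster `i`, and there are fewer than `m` such clusters, so together they weigh less
than cluster `i` alone, hence less than the class `v`. -/

open Real

section SoftMajority

variable {ι : Type*} [Fintype ι] (w : ι → ℝ) (p : ι → Prop) [DecidablePred p]

theorem half_lt_sum_filter_div_sum (hw : ∀ j, 0 ≤ w j)
    (hlt : ∑ j ∈ Finset.univ.filter (fun j => ¬p j), w j < ∑ j ∈ Finset.univ.filter p, w j) :
    1 / 2 < (∑ j ∈ Finset.univ.filter p, w j) / ∑ j, w j := by
  have hsplit := Finset.sum_filter_add_sum_filter_not Finset.univ p w
  have hnot : 0 ≤ ∑ j ∈ Finset.univ.filter (fun j => ¬p j), w j :=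
    Finset.sum_nonneg fun j _ => hw j
  rw [lt_div_iff₀ (by linarith)]
  linarith

theorem sum_filter_not_lt_of_le_div_card {i : ι} (hi : p i) (hwi : 0 < w i)
    (hw : ∀ j, ¬p j → w j ≤ w i / Fintype.card ι) :
    ∑ j ∈ Finset.univ.filter (fun j => ¬p j), w j < w i := by
  set s := Finset.univ.filter (fun j => ¬p j)
  have hcard : (s.card : ℝ) < Fintype.card ι := by
    exact_mod_cast Finset.card_lt_univ_of_notMem (by simp [s, hi] : i ∉ s)
  have hn : (0 : ℝ) < Fintype.card ι := Fintype.card_pos_iff.mpr ⟨i⟩ |> Nat.cast_pos.mpr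
  calc ∑ j ∈ s, w j ≤ s.card • (w i / Fintype.card ι) :=
        Finset.sum_le_card_nsmul s w _ fun j hj => hw j (Finset.mem_filter.mp hj).2
    _ < Fintype.card ι * (w i / Fintype.card ι) := by
        rw [nsmul_eq_mul]
        exact mul_lt_mul_of_pos_right hcard (by positivity)
    _ = w i := by field_simp

end SoftMajority

theorem exp_neg_div_lt_exp_neg_div_div {x y τ n : ℝ} (hτ : 0 < τ) (hn : 0 < n)
    (h : x + τ * log n < y) :
    exp (-y / τ) < exp (-x / τ) / n := by
  rw [← exp_log hn, ← exp_sub, exp_lt_exp, div_sub' hτ.ne', div_lt_div_iff_of_pos_right hτ]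
  linarith

theorem clustr_magnet_inference_margin_general
    {d m L : ℕ} (a : EuclideanSpace ℝ (Fin d)) (σ : ℝ) (hσ : 0 < σ)
    (μ : Fin m → EuclideanSpace ℝ (Fin d)) (c : Fin m → Fin L) (v : Fin L)
    (i : Fin m) (hi : c i = v)
    (hmargin : ∀ j, c j ≠ v →
      ‖a - μ i‖ ^ 2 + 2 * σ ^ 2 * Real.log m < ‖a - μ j‖ ^ 2) :
    (∑ j ∈ Finset.univ.filter (fun j => c j = v),
        exp (-‖a - μ j‖ ^ 2 / (2 * σ ^ 2))) /
      (∑ j, exp (-‖a - μ j‖ ^ 2 / (2 * σ ^ 2))) > 1 / 2 := by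
  set w : Fin m → ℝ := fun j => exp (-‖a - μ j‖ ^ 2 / (2 * σ ^ 2))
  have hw : ∀ j, 0 < w j := fun j => exp_pos _
  have hm : (0 : ℝ) < m := Nat.cast_pos.mpr i.pos
  have hfar : ∀ j, c j ≠ v → w j ≤ w i / Fintype.card (Fin m) := fun j hj => by
    rw [Fintype.card_fin]
    exact (exp_neg_div_lt_exp_neg_div_div (by positivity) hm (hmargin j hj)).le
  refine half_lt_sum_filter_div_sum w (fun j => c j = v) (fun j => (hw j).le) ?_
  calc ∑ j ∈ Finset.univ.filter (fun j => ¬c j = v), w j < w i :=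
        sum_filter_not_lt_of_le_div_card w (fun j => c j = v) hi (hw i) hfar
    _ ≤ ∑ j ∈ Finset.univ.filter (fun j => c j = v), w j :=
        Finset.single_le_sum (fun j _ => (hw j).le)
          (Finset.mem_filter.mpr ⟨Finset.mem_univ i, hi⟩)

theorem clustr_magnet_inference_margin
    {d m L : ℕ} (hm : 0 < m) (a : EuclideanSpace ℝ (Fin d)) (σ : ℝ) (hσ : 0 < σ)
    (μ : Fin m → EuclideanSpace ℝ (Fin d)) (c : Fin m → Fin L) (v : Fin L)
    (i : Fin m) (hi : c i = v)
    (hmargin : ∀ j, c j ≠ v →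
      ‖a - μ i‖ ^ 2 + 2 * σ ^ 2 * Real.log m < ‖a - μ j‖ ^ 2) :
    (∑ j ∈ Finset.univ.filter (fun j => c j = v),
        exp (-‖a - μ j‖ ^ 2 / (2 * σ ^ 2))) /
      (∑ j, exp (-‖a - μ j‖ ^ 2 / (2 * σ ^ 2))) > 1 / 2 :=
  clustr_magnet_inference_margin_general a σ hσ μ c v i hi hmargin
end
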